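/- Let G=(V,E) be a connected simple graph not isomorphic to a star, let k be an integer with 1 ≤ k < |V|−1, and let G'=(V',E') = β(G,k). If S1 ⊊ V' is such that G'[S1] is a proportionally dense subgraph and |S1| ≥ |L| + |M| + k, then there exists S2 ⊊ V' such that G'[S2] is a proportionally dense subgraph, |S2| ≥ |S1|, and L ∪ M ⊆ S2. -/

import Mathlib

open SimpleGraph

/-- Number of neighbors of `v` inside `T`. -/
noncomputable def degIn {W : Type*} (G : SimpleGraph W) (T : Set W) (v : W) : ℕ :=
  (T ∩ G.neighborSet v).ncard

/-- `G[S]` is a proportionally dense subgraph. -/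
def IsPDS {W : Type*} (G : SimpleGraph W) (S : Set W) : Prop :=
  S ⊂ Set.univ ∧ 2 ≤ S.ncard ∧
    ∀ u ∈ S, degIn G Sᶜ u * (S.ncard - 1) ≤ degIn G S u * Sᶜ.ncard

/-- A star is a complete bipartite graph `K_{1,ℓ}`, `ℓ ≥ 1`. -/
def IsStar {V : Type*} (G : SimpleGraph V) : Prop :=
  ∃ ℓ : ℕ, 1 ≤ ℓ ∧ Nonempty (G ≃g completeBipartiteGraph Unit (Fin ℓ))

/-- The number `|L| = |M| ⬝ (|V| - k - 1) - k + 1` of extra vertices in `β(G,k)`. -/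
noncomputable def lsize {V : Type*} [Fintype V] (G : SimpleGraph V) (k : ℕ) : ℕ :=
  G.edgeSet.ncard * (Fintype.card V - k - 1) - k + 1

/-- Vertex type of the bipartite graph `β(G,k)`: `L` (the `Fin` part), `M` (edge
vertices), and `N = V`. -/
abbrev BetaVert (V : Type*) [Fintype V] (G : SimpleGraph V) (k : ℕ) : Type _ :=
  (Fin (lsize G k) ⊕ ↥G.edgeSet) ⊕ V

/-- The bipartite graph `β(G,k)`: every vertex of `M` is adjacent to every vertex
of `L`, and a vertex `e ∈ M` is adjacent to `u ∈ N` iff `u` is not an endpoint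
of the edge `e` of `G`; there are no other edges. -/
def betaGraph {V : Type*} [Fintype V] (G : SimpleGraph V) (k : ℕ) :
    SimpleGraph (BetaVert V G k) where
  Adj x y :=
    match x, y with
    | Sum.inl (Sum.inl _), Sum.inl (Sum.inr _) => True
    | Sum.inl (Sum.inr _), Sum.inl (Sum.inl _) => True
    | Sum.inl (Sum.inr e), Sum.inr u => u ∉ (e : Sym2 V)
    | Sum.inr u, Sum.inl (Sum.inr e) => u ∉ (e : Sym2 V)
    | _, _ => False
  symm := by
    constructor
    rintro ((a | e) | u) ((b | f) | v) h <;> simp_all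
  loopless := by
    constructor
    rintro ((a | e) | u) h <;> simp_all

/-- The set `L ∪ M` in `β(G,k)`. -/
def betaLM {V : Type*} [Fintype V] (G : SimpleGraph V) (k : ℕ) : Set (BetaVert V G k) :=
  Set.range Sum.inl

/-- The set `M` of edge-vertices in `β(G,k)`. -/
def betaM {V : Type*} [Fintype V] (G : SimpleGraph V) (k : ℕ) : Set (BetaVert V G k) :=
  Set.range (fun e : ↥G.edgeSet => Sum.inl (Sum.inr e))

/-!
Write `ℓ = |L|`, `m = |M|`, `n = |V|`. The size of `L` is chosen so that
`m (n - k) < ℓ + m + k`, and connectivity gives `n ≤ m + 1`. A PDS `S` with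
`|S| ≥ ℓ + m + k` has at most `n - k` vertices outside. If `S` missed `L`, the PDS
inequality would fail at any vertex of `S ∩ M`, all of whose `ℓ` neighbours in `L` lie outside;
so `S` meets `L`, and the inequality at a vertex of `S ∩ L` forces `M ⊆ S`. Then no edge `uv`
of `G` has both ends in `S`: the vertex `uv ∈ M` would be adjacent to everything outside `S`,
and the PDS inequality would make it adjacent to everything in `S`, including `u`.
Finally `S ∪ L ∪ M` is a PDS: vertices of `L` and `N` have no neighbours outside it, and since
`S ∩ N` is independent, an edge-vertex misses at most one vertex of `S ∩ N` and at least one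
vertex outside.
-/

theorem Nat.mul_le_mul_of_lt_of_mul_le {x y c m s : ℕ} (hx : x < c) (hcm : c * m ≤ s)
    (hs : s ≤ y + m) : x * s ≤ y * c := by
  nlinarith

theorem Set.ncard_le_ncard_sdiff_add_one {α : Type*} [Finite α] {s t : Set α}
    (h : (s ∩ t).Subsingleton) : s.ncard ≤ (s \ t).ncard + 1 := by
  have := Set.ncard_le_one_iff_subsingleton.mpr h
  have := Set.ncard_inter_add_ncard_sdiff_eq_ncard s t
  omega

theorem Set.ncard_sdiff_add_one_le {α : Type*} [Finite α] {s t : Set α}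
    (h : (s ∩ t).Nonempty) : (s \ t).ncard + 1 ≤ s.ncard := by
  have := (Set.ncard_pos).mpr h
  have := Set.ncard_inter_add_ncard_sdiff_eq_ncard s t
  omega

theorem Set.ncard_eq_ncard_preimage_inl_add_ncard_preimage_inr {α β : Type*} [Finite α]
    [Finite β] (s : Set (α ⊕ β)) :
    s.ncard = (Sum.inl ⁻¹' s).ncard + (Sum.inr ⁻¹' s).ncard := by
  conv_lhs => rw [← Set.image_preimage_inl_union_image_preimage_inr s]
  rw [Set.ncard_union_eq Set.disjoint_image_inl_image_inr,
    Set.ncard_image_of_injective _ Sum.inl_injective,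
    Set.ncard_image_of_injective _ Sum.inr_injective]

namespace SimpleGraph

variable {V : Type*} {G : SimpleGraph V} {D : Set V} {e : Sym2 V}

theorem IsIndepSet.inter_subsingleton_of_mem_edgeSet (hD : G.IsIndepSet D)
    (he : e ∈ G.edgeSet) : (D ∩ (e : Set V)).Subsingleton := by
  rintro u ⟨huD, hue⟩ v ⟨hvD, hve⟩
  by_contra huv
  rw [(Sym2.mem_and_mem_iff huv).mp ⟨hue, hve⟩] at he
  exact hD huD hvD huv he

theorem IsIndepSet.compl_inter_nonempty_of_mem_edgeSet (hD : G.IsIndepSet D)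
    (he : e ∈ G.edgeSet) : (Dᶜ ∩ (e : Set V)).Nonempty := by
  induction e using Sym2.ind with
  | _ u v =>
    by_contra! h
    have hu : u ∈ D := by_contra fun hu => h.subset ⟨hu, Sym2.mem_mk_left u v⟩
    have hv : v ∈ D := by_contra fun hv => h.subset ⟨hv, Sym2.mem_mk_right u v⟩
    exact hD hu hv (G.ne_of_adj he) he

end SimpleGraph

theorem degIn_compl_eq_zero_of_neighborSet_subset {W : Type*} {H : SimpleGraph W} {S : Set W}
    {u : W} (h : H.neighborSet u ⊆ S) : degIn H Sᶜ u = 0 := by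
  rw [degIn, (Set.disjoint_compl_left_iff_subset.mpr h).inter_eq, Set.ncard_empty]

theorem IsPDS.adj_of_compl_subset_neighborSet {W : Type*} [Finite W] {H : SimpleGraph W}
    {S : Set W} (hS : IsPDS H S) {u v : W} (hu : u ∈ S) (hv : v ∈ S) (huv : u ≠ v)
    (hc : Sᶜ ⊆ H.neighborSet u) : H.Adj u v := by
  obtain ⟨hproper, h2, hineq⟩ := hS
  by_contra hnadj
  have hc_pos : 0 < Sᶜ.ncard := (Set.ncard_pos).mpr (Set.nonempty_compl.mpr hproper.ne)
  have hout : degIn H Sᶜ u = Sᶜ.ncard := by rw [degIn, Set.inter_eq_left.mpr hc]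
  have hin : degIn H S u + 2 ≤ S.ncard := by
    have hsub : S ∩ H.neighborSet u ⊆ S \ {u, v} := fun w ⟨hwS, hwN⟩ =>
      ⟨hwS, by rintro (rfl | rfl) <;> simp_all⟩
    have hpair : ({u, v} : Set W) ⊆ S := Set.insert_subset hu (Set.singleton_subset_iff.mpr hv)
    have := Set.ncard_le_ncard hsub
    rw [Set.ncard_sdiff hpair, Set.ncard_pair huv] at this
    rw [degIn]
    omega
  have := hineq u hu
  rw [hout] at this
  have := Nat.mul_lt_mul_of_pos_right (show degIn H S u < S.ncard - 1 by omega) hc_pos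
  linarith

/- A set `T` of vertices of `β(G,k)` is described by its traces `Sum.inl ⁻¹' (Sum.inl ⁻¹' T)`,
`Sum.inr ⁻¹' (Sum.inl ⁻¹' T)` and `Sum.inr ⁻¹' T` on `L`, `M` and `N`. -/
section Beta

variable {V : Type*} [Fintype V] {G : SimpleGraph V} {k : ℕ}

theorem ncard_betaVert (T : Set (BetaVert V G k)) :
    T.ncard = (Sum.inl ⁻¹' (Sum.inl ⁻¹' T)).ncard + (Sum.inr ⁻¹' (Sum.inl ⁻¹' T)).ncard +
      (Sum.inr ⁻¹' T).ncard := by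
  rw [Set.ncard_eq_ncard_preimage_inl_add_ncard_preimage_inr T,
    Set.ncard_eq_ncard_preimage_inl_add_ncard_preimage_inr (Sum.inl ⁻¹' T)]

theorem card_betaVert :
    Nat.card (BetaVert V G k) = lsize G k + G.edgeSet.ncard + Fintype.card V := by
  simp [Nat.card_eq_fintype_card, ← Nat.card_coe_set_eq]

theorem degIn_betaGraph_inl_inl (T : Set (BetaVert V G k)) (a : Fin (lsize G k)) :
    degIn (betaGraph G k) T (Sum.inl (Sum.inl a)) = (Sum.inr ⁻¹' (Sum.inl ⁻¹' T)).ncard := by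
  rw [degIn, ncard_betaVert]
  simp [Set.preimage, betaGraph]

theorem degIn_betaGraph_inl_inr (T : Set (BetaVert V G k)) (e : G.edgeSet) :
    degIn (betaGraph G k) T (Sum.inl (Sum.inr e)) =
      (Sum.inl ⁻¹' (Sum.inl ⁻¹' T)).ncard + (Sum.inr ⁻¹' T \ ((e : Sym2 V) : Set V)).ncard := by
  rw [degIn, ncard_betaVert]
  simp only [Set.preimage, betaGraph, Set.mem_inter_iff, mem_neighborSet, Set.mem_ofPred_eq,
    and_true, and_false, Set.ofPred_false, Set.ncard_empty, add_zero, Nat.add_left_cancel_iff]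
  rfl

theorem lsize_pos : 0 < lsize G k := Nat.succ_pos _

theorem card_edgeSet_mul_lt_lsize_add (G : SimpleGraph V) (k : ℕ) :
    G.edgeSet.ncard * (Fintype.card V - k) < lsize G k + G.edgeSet.ncard + k := by
  have : G.edgeSet.ncard * (Fintype.card V - k) ≤
      G.edgeSet.ncard * (Fintype.card V - k - 1) + G.edgeSet.ncard := by
    rw [← Nat.mul_succ]
    exact Nat.mul_le_mul_left _ (by omega)
  unfold lsize
  omega

theorem IsPDS.preimage_inl_inl_nonempty {S : Set (BetaVert V G k)}
    (hS : IsPDS (betaGraph G k) S) (hn : Fintype.card V ≤ G.edgeSet.ncard + 1) (hk1 : 1 ≤ k)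
    (hk2 : k + 2 ≤ Fintype.card V) (hcard : lsize G k + G.edgeSet.ncard + k ≤ S.ncard) :
    (Sum.inl ⁻¹' (Sum.inl ⁻¹' S)).Nonempty := by
  by_contra hA
  rw [Set.not_nonempty_iff_eq_empty] at hA
  have hsize := ncard_betaVert S
  have hcompl := Set.ncard_add_ncard_compl S
  have hC : (Sum.inr ⁻¹' S).ncard ≤ Fintype.card V :=
    (Set.ncard_le_card _).trans Nat.card_eq_fintype_card.le
  have hq := card_edgeSet_mul_lt_lsize_add G k
  have h2m : 2 * G.edgeSet.ncard ≤ G.edgeSet.ncard * (Fintype.card V - k) := by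
    rw [mul_comm]
    exact Nat.mul_le_mul_left _ (by omega)
  rw [hA, Set.ncard_empty] at hsize
  rw [card_betaVert] at hcompl
  obtain ⟨e, he⟩ := Set.nonempty_of_ncard_ne_zero
    (show (Sum.inr ⁻¹' (Sum.inl ⁻¹' S)).ncard ≠ 0 by omega)
  have hineq := hS.2.2 _ he
  rw [degIn_betaGraph_inl_inr, degIn_betaGraph_inl_inr] at hineq
  simp only [Set.preimage_compl, hA, Set.compl_empty, Set.ncard_univ, Nat.card_eq_fintype_card,
    Fintype.card_fin, Set.ncard_empty, zero_add] at hineq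
  have hy : (Sum.inr ⁻¹' S \ ((e : Sym2 V) : Set V)).ncard ≤ Fintype.card V :=
    (Set.ncard_le_ncard Set.sdiff_subset).trans hC
  have hchain : 2 * (G.edgeSet.ncard * (Fintype.card V - k)) ≤
      Fintype.card V * (Fintype.card V - k) :=
    calc 2 * (G.edgeSet.ncard * (Fintype.card V - k))
        ≤ lsize G k * (S.ncard - 1) := Nat.mul_le_mul (by omega) (by omega)
      _ ≤ _ := Nat.mul_le_mul_right _ (Nat.le_add_right _ _)
      _ ≤ _ := hineq
      _ ≤ Fintype.card V * (Fintype.card V - k) := Nat.mul_le_mul hy (by omega)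
  have := Nat.le_of_mul_le_mul_right (by simpa only [← mul_assoc] using hchain)
    (by omega : 0 < Fintype.card V - k)
  omega

theorem IsPDS.betaM_subset {S : Set (BetaVert V G k)} (hS : IsPDS (betaGraph G k) S)
    (hcard : lsize G k + G.edgeSet.ncard + k ≤ S.ncard)
    (hL : (Sum.inl ⁻¹' (Sum.inl ⁻¹' S)).Nonempty) : betaM G k ⊆ S := by
  obtain ⟨a, ha⟩ := hL
  rw [betaM, Set.range_subset_iff]
  by_contra! ⟨e, he⟩
  have hineq := hS.2.2 _ ha
  rw [degIn_betaGraph_inl_inl, degIn_betaGraph_inl_inl, Set.preimage_compl,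
    Set.preimage_compl] at hineq
  have hBc : 1 ≤ (Sum.inr ⁻¹' (Sum.inl ⁻¹' S))ᶜ.ncard := (Set.ncard_pos).mpr ⟨e, he⟩
  have hB := Set.ncard_add_ncard_compl (Sum.inr ⁻¹' (Sum.inl ⁻¹' S))
  have hcompl := Set.ncard_add_ncard_compl S
  have hc : 1 ≤ Sᶜ.ncard := (Set.ncard_pos).mpr (Set.nonempty_compl.mpr hS.1.ne)
  have hq := card_edgeSet_mul_lt_lsize_add G k
  rw [Nat.card_coe_set_eq] at hB
  rw [card_betaVert] at hcompl
  have hchain : G.edgeSet.ncard * Sᶜ.ncard ≤ (G.edgeSet.ncard - 1) * Sᶜ.ncard :=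
    calc G.edgeSet.ncard * Sᶜ.ncard
        ≤ G.edgeSet.ncard * (Fintype.card V - k) := Nat.mul_le_mul_left _ (by omega)
      _ ≤ S.ncard - 1 := by omega
      _ ≤ _ := Nat.le_mul_of_pos_left _ hBc
      _ ≤ _ := hineq
      _ ≤ (G.edgeSet.ncard - 1) * Sᶜ.ncard := Nat.mul_le_mul_right _ (by omega)
  have := Nat.le_of_mul_le_mul_right hchain hc
  omega

theorem IsPDS.isIndepSet_preimage_inr {S : Set (BetaVert V G k)}
    (hS : IsPDS (betaGraph G k) S) (hM : betaM G k ⊆ S) : G.IsIndepSet (Sum.inr ⁻¹' S) := by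
  intro u hu v hv huv hadj
  have hadj' := hS.adj_of_compl_subset_neighborSet (hM ⟨⟨s(u, v), hadj⟩, rfl⟩) hu
    Sum.inl_ne_inr ?_
  · simp [betaGraph] at hadj'
  · rintro ((a | f) | w) hw
    · simp [betaGraph]
    · exact absurd (hM ⟨f, rfl⟩) hw
    · simp only [mem_neighborSet, betaGraph, Sym2.mem_iff]
      rintro (rfl | rfl)
      exacts [hw hu, hw hv]

theorem ncard_of_betaLM_subset {T : Set (BetaVert V G k)} (hLM : betaLM G k ⊆ T) :
    T.ncard = lsize G k + G.edgeSet.ncard + (Sum.inr ⁻¹' T).ncard := by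
  rw [ncard_betaVert, Set.preimage_eq_univ_iff.mpr hLM]
  simp

theorem ncard_compl_of_betaLM_subset {T : Set (BetaVert V G k)} (hLM : betaLM G k ⊆ T) :
    Tᶜ.ncard = (Sum.inr ⁻¹' T)ᶜ.ncard := by
  rw [ncard_betaVert]
  simp [Set.preimage_compl, Set.preimage_eq_univ_iff.mpr hLM]

theorem degIn_compl_inl_inr_mul_le_of_betaLM_subset {T : Set (BetaVert V G k)}
    (hLM : betaLM G k ⊆ T) (hD : G.IsIndepSet (Sum.inr ⁻¹' T))
    (hk : k ≤ (Sum.inr ⁻¹' T).ncard) (e : G.edgeSet) :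
    degIn (betaGraph G k) Tᶜ (Sum.inl (Sum.inr e)) * (T.ncard - 1) ≤
      degIn (betaGraph G k) T (Sum.inl (Sum.inr e)) * Tᶜ.ncard := by
  set D := Sum.inr ⁻¹' T with hD_def
  rw [degIn_betaGraph_inl_inr, degIn_betaGraph_inl_inr, ncard_of_betaLM_subset hLM,
    ncard_compl_of_betaLM_subset hLM]
  simp only [Set.preimage_compl, Set.preimage_eq_univ_iff.mpr hLM, Set.compl_univ,
    Set.preimage_univ, Set.preimage_empty, Set.ncard_empty, Set.ncard_univ, zero_add,
    Nat.card_eq_fintype_card, Fintype.card_fin, ← hD_def]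
  have hin := Set.ncard_le_ncard_sdiff_add_one (hD.inter_subsingleton_of_mem_edgeSet e.2)
  have hout := Set.ncard_sdiff_add_one_le (hD.compl_inter_nonempty_of_mem_edgeSet e.2)
  have hDc := Set.ncard_add_ncard_compl D
  have hq := card_edgeSet_mul_lt_lsize_add G k
  have hℓ : 0 < lsize G k := lsize_pos
  rw [Nat.card_eq_fintype_card] at hDc
  refine Nat.mul_le_mul_of_lt_of_mul_le (m := G.edgeSet.ncard) hout ?_ (by omega)
  calc Dᶜ.ncard * G.edgeSet.ncard
      ≤ G.edgeSet.ncard * (Fintype.card V - k) := by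
        rw [mul_comm]; exact Nat.mul_le_mul_left _ (by omega)
    _ ≤ _ := by omega

theorem isPDS_of_betaLM_subset (hE : G.edgeSet.Nonempty) {T : Set (BetaVert V G k)}
    (hLM : betaLM G k ⊆ T) (hD : G.IsIndepSet (Sum.inr ⁻¹' T))
    (hk : k ≤ (Sum.inr ⁻¹' T).ncard) : IsPDS (betaGraph G k) T := by
  obtain ⟨e0, he0⟩ := hE
  obtain ⟨w, hw, -⟩ := hD.compl_inter_nonempty_of_mem_edgeSet he0
  have hm : 0 < G.edgeSet.ncard := (Set.ncard_pos).mpr ⟨e0, he0⟩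
  have hT := ncard_of_betaLM_subset hLM
  have hℓ : 0 < lsize G k := lsize_pos
  refine ⟨Set.ssubset_univ_iff.mpr fun h => hw (by simp [h]), by omega, ?_⟩
  rintro ((a | e) | u) -
  · rw [degIn_betaGraph_inl_inl]
    simp [Set.preimage_compl, Set.preimage_eq_univ_iff.mpr hLM]
  · exact degIn_compl_inl_inr_mul_le_of_betaLM_subset hLM hD hk e
  · rw [degIn_compl_eq_zero_of_neighborSet_subset]
    · simp
    · rintro ((b | f) | w) h
      · simp [betaGraph] at h
      · exact hLM ⟨_, rfl⟩
      · simp [betaGraph] at h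

end Beta

theorem beta_pds_enlarge_general {V : Type*} [Fintype V] (G : SimpleGraph V)
    (hconn : G.Connected)
    (k : ℕ) (hk1 : 1 ≤ k) (hk2 : k < Fintype.card V - 1)
    (S1 : Set (BetaVert V G k)) (h1 : IsPDS (betaGraph G k) S1)
    (hcard : lsize G k + G.edgeSet.ncard + k ≤ S1.ncard) :
    ∃ S2 : Set (BetaVert V G k),
      IsPDS (betaGraph G k) S2 ∧ S1.ncard ≤ S2.ncard ∧ betaLM G k ⊆ S2 := by
  have hn : Fintype.card V ≤ G.edgeSet.ncard + 1 := by
    simpa [Nat.card_eq_fintype_card] using hconn.card_vert_le_card_edgeSet_add_one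
  have hM := h1.betaM_subset hcard (h1.preimage_inl_inl_nonempty hn hk1 (by omega) hcard)
  have hE : G.edgeSet.Nonempty := Set.nonempty_of_ncard_ne_zero (by omega)
  have hinr : Sum.inr ⁻¹' (betaLM G k ∪ S1) = Sum.inr ⁻¹' S1 := by simp [betaLM]
  have hk : k ≤ (Sum.inr ⁻¹' S1).ncard := by
    have := ncard_betaVert S1
    have : (Sum.inl ⁻¹' (Sum.inl ⁻¹' S1)).ncard ≤ lsize G k :=
      (Set.ncard_le_card _).trans (Nat.card_fin _).le
    have : (Sum.inr ⁻¹' (Sum.inl ⁻¹' S1)).ncard ≤ G.edgeSet.ncard :=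
      (Set.ncard_le_card _).trans (Nat.card_coe_set_eq _).le
    omega
  refine ⟨betaLM G k ∪ S1, isPDS_of_betaLM_subset hE Set.subset_union_left ?_ (hinr ▸ hk),
    Set.ncard_le_ncard Set.subset_union_right, Set.subset_union_left⟩
  exact hinr ▸ h1.isIndepSet_preimage_inr hM

/-- Lemma 6 of the paper: any PDS of `β(G,k)` of size at least `|L| + |M| + k` can
be turned into a PDS at least as large containing `L ∪ M`. -/
theorem beta_pds_enlarge {V : Type*} [Fintype V] (G : SimpleGraph V)
    (hconn : G.Connected) (hstar : ¬ IsStar G)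
    (k : ℕ) (hk1 : 1 ≤ k) (hk2 : k < Fintype.card V - 1)
    (S1 : Set (BetaVert V G k)) (h1 : IsPDS (betaGraph G k) S1)
    (hcard : lsize G k + G.edgeSet.ncard + k ≤ S1.ncard) :
    ∃ S2 : Set (BetaVert V G k),
      IsPDS (betaGraph G k) S2 ∧ S1.ncard ≤ S2.ncard ∧ betaLM G k ⊆ S2 :=
  beta_pds_enlarge_general G hconn k hk1 hk2 S1 h1 hcard
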